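/- For every positive integer m, the 4-coloring of [8m+3] that colors 1 with C, then repeats the block ABCC m times, then the block DDAB m times, then two final elements colored D, B, contains no rainbow 4-term arithmetic progression. -/
import Mathlib


inductive Color | A | B | C | D
  deriving DecidableEq

open Color

/-- A coloring `c` of `{1,...,n}` contains a rainbow 4-term AP. -/
def RainbowAP4 (n : ℕ) (c : ℕ → Color) : Prop :=
  ∃ t d : ℕ, 1 ≤ t ∧ 1 ≤ d ∧ t + 3*d ≤ n ∧
    c t ≠ c (t+d) ∧ c t ≠ c (t+2*d) ∧ c t ≠ c (t+3*d) ∧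
    c (t+d) ≠ c (t+2*d) ∧ c (t+d) ≠ c (t+3*d) ∧ c (t+2*d) ≠ c (t+3*d)

/-- The coloring for STATEMENT 4. -/
def col (m i : ℕ) : Color :=
  if i = 1 then C else if i ≤ 4*m+1 then (if i % 4 = 2 then A else if i % 4 = 3 then B else C) else if i ≤ 8*m+1 then (if i % 4 = 2 ∨ i % 4 = 3 then D else if i % 4 = 0 then A else B) else if i = 8*m+2 then D else B

lemma eqC (m i : ℕ) (h : col m i = C) : i ≤ 4*m+1 ∧ (i % 4 = 0 ∨ i % 4 = 1) := by
  unfold col at h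
  split_ifs at h <;> first | exact absurd h (by decide) | omega

lemma eqD (m i : ℕ) (h : col m i = D) :
    4*m+2 ≤ i ∧ i ≤ 8*m+2 ∧ (i % 4 = 2 ∨ i % 4 = 3) := by
  unfold col at h
  split_ifs at h <;> first | exact absurd h (by decide) | omega

lemma eqA (m i : ℕ) (h : col m i = A) :
    (i ≤ 4*m+1 ∧ i % 4 = 2) ∨ (4*m+2 ≤ i ∧ i ≤ 8*m+1 ∧ i % 4 = 0) := by
  unfold col at h
  split_ifs at h <;> first | exact absurd h (by decide) | omega

lemma eqB (m i : ℕ) (h : col m i = B) (hle : i ≤ 8*m+3) :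
    (i ≤ 4*m+1 ∧ i % 4 = 3) ∨ (4*m+2 ≤ i ∧ i ≤ 8*m+1 ∧ i % 4 = 1) ∨ i = 8*m+3 := by
  unfold col at h
  split_ifs at h <;> first | exact absurd h (by decide) | omega

lemma hit : ∀ a b c d e : Color, a ≠ b → a ≠ c → a ≠ d → b ≠ c → b ≠ d → c ≠ d →
    a = e ∨ b = e ∨ c = e ∨ d = e := by
  intro a b c d e
  cases a <;> cases b <;> cases c <;> cases d <;> cases e <;> decide

theorem stmt_4 (m : ℕ) (hm : 0 < m) :
    ¬ RainbowAP4 (8*m+3) (col m) := by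
  rintro ⟨t, d, ht, hd, hn, h01, h02, h03, h12, h13, h23⟩
  have hC := hit _ _ _ _ C h01 h02 h03 h12 h13 h23
  have hD := hit _ _ _ _ D h01 h02 h03 h12 h13 h23
  have hA := hit _ _ _ _ A h01 h02 h03 h12 h13 h23
  have hB := hit _ _ _ _ B h01 h02 h03 h12 h13 h23
  rcases hC with hc|hc|hc|hc <;> rcases hD with hd1|hd1|hd1|hd1 <;>
    rcases hA with ha|ha|ha|ha <;> rcases hB with hb|hb|hb|hb <;>
    (have c1 := eqC m _ hc
     have c2 := eqD m _ hd1
     have c3 := eqA m _ ha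
     have c4 := eqB m _ hb (by omega)
     omega)
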